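/- arXiv:1907.04720 — 4 statements merged into one kernel-verified Lean document; each statement's English description precedes it below -/
import Mathlib

section
/- For every x = (x₁,x₂,x₃) ∈ ℝ³, the Euclidean norm of Z(x) satisfies exp(x₃)/2 ≤ ‖Z(x)‖ ≤ √3·exp(x₃). In particular, for every ε > 0, if x₃ ≤ log ε then ‖Z(x)‖ < 2ε. -/
/-!
Write `Z x = exp x₃ • v` with `v = (a, b, c)`, `a = h x₁`, `b = h x₂`. Every coordinate of `v` lies
in `[-1, 1]`, so `‖v‖ ≤ √3`. With `m = max |a| |b|` we have `|c| = 1 - m`, hence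
`‖v‖² ≥ m² + (1 - m)² ≥ 1/2`.
-/

/-- Explicit vector in ℝ³ (with the Euclidean norm). -/
def vec3 (a b c : ℝ) : EuclideanSpace ℝ (Fin 3) := WithLp.toLp 2 ![a, b, c]

/-- The 4-periodic sawtooth: h(t) = t on [-1,1], h(t) = 2 - t on [1,3]. -/
noncomputable def h (t : ℝ) : ℝ := 1 - |4 * Int.fract ((t + 1) / 4) - 2|

/-- The sign function ε(t) = (-1)^⌊(t+1)/2⌋. -/
noncomputable def eps (t : ℝ) : ℝ := (-1 : ℝ) ^ ⌊(t + 1) / 2⌋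

/-- The Zorich-type map Z : ℝ³ → ℝ³. -/
noncomputable def Z (x : EuclideanSpace ℝ (Fin 3)) : EuclideanSpace ℝ (Fin 3) :=
  Real.exp (x 2) •
    vec3 (h (x 0)) (h (x 1)) (eps (x 0) * eps (x 1) * (1 - max |h (x 0)| |h (x 1)|))

/-- Rotation by π about the vertical line {(u,v,t) : t ∈ ℝ}. -/
noncomputable def Rot (u v : ℝ) (x : EuclideanSpace ℝ (Fin 3)) : EuclideanSpace ℝ (Fin 3) :=
  vec3 (2 * u - x 0) (2 * v - x 1) (x 2)

lemma norm_vec3 (a b c : ℝ) : ‖vec3 a b c‖ = √(a ^ 2 + b ^ 2 + c ^ 2) := by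
  rw [EuclideanSpace.norm_eq]
  simp [vec3, Fin.sum_univ_three, sq_abs]

lemma one_half_le_norm_vec3 {a b c : ℝ} (hc : |c| = 1 - max |a| |b|) :
    1 / 2 ≤ ‖vec3 a b c‖ := by
  have hmax : max |a| |b| ^ 2 ≤ a ^ 2 + b ^ 2 := by
    rcases max_choice |a| |b| with hm | hm <;> rw [hm, sq_abs] <;> nlinarith [sq_nonneg a, sq_nonneg b]
  have hsum : 1 / 4 ≤ a ^ 2 + b ^ 2 + c ^ 2 := by
    rw [← sq_abs c, hc]
    nlinarith [sq_nonneg (2 * max |a| |b| - 1)]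
  rw [norm_vec3, Real.le_sqrt (by norm_num) (by positivity)]
  linarith

lemma norm_vec3_le_sqrt_three {a b c : ℝ} (ha : |a| ≤ 1) (hb : |b| ≤ 1) (hc : |c| ≤ 1) :
    ‖vec3 a b c‖ ≤ √3 := by
  rw [norm_vec3]
  gcongr
  have : ∀ t : ℝ, |t| ≤ 1 → t ^ 2 ≤ 1 := fun t ht => by
    rw [← sq_abs]; nlinarith [abs_nonneg t]
  linarith [this a ha, this b hb, this c hc]

lemma abs_h_le_one (t : ℝ) : |h t| ≤ 1 := by
  have := Int.fract_nonneg ((t + 1) / 4)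
  have := Int.fract_lt_one ((t + 1) / 4)
  rw [h, abs_le]
  constructor <;> cases abs_cases (4 * Int.fract ((t + 1) / 4) - 2) <;> linarith

lemma abs_eps (t : ℝ) : |eps t| = 1 := by
  simp [eps, abs_zpow]

lemma abs_third_coord_Z (x : EuclideanSpace ℝ (Fin 3)) :
    |eps (x 0) * eps (x 1) * (1 - max |h (x 0)| |h (x 1)|)| = 1 - max |h (x 0)| |h (x 1)| := by
  rw [abs_mul, abs_mul, abs_eps, abs_eps, one_mul, one_mul, abs_of_nonneg]
  simpa using And.intro (abs_h_le_one (x 0)) (abs_h_le_one (x 1))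

/-- exp(x₃)/2 ≤ ‖Z(x)‖ ≤ √3·exp(x₃); in particular, for every ε > 0,
    if x₃ ≤ log ε then ‖Z(x)‖ < 2ε. -/
theorem zorich_norm_bounds (x : EuclideanSpace ℝ (Fin 3)) :
    (Real.exp (x 2) / 2 ≤ ‖Z x‖ ∧ ‖Z x‖ ≤ Real.sqrt 3 * Real.exp (x 2)) ∧
      ∀ ε : ℝ, 0 < ε → x 2 ≤ Real.log ε → ‖Z x‖ < 2 * ε := by
  have hc := abs_third_coord_Z x
  have hnorm : ‖Z x‖ = Real.exp (x 2) *
      ‖vec3 (h (x 0)) (h (x 1)) (eps (x 0) * eps (x 1) * (1 - max |h (x 0)| |h (x 1)|))‖ := by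
    rw [Z, norm_smul, Real.norm_of_nonneg (Real.exp_pos _).le]
  have hlo : Real.exp (x 2) / 2 ≤ ‖Z x‖ := by
    rw [hnorm, div_eq_mul_one_div]
    exact mul_le_mul_of_nonneg_left (one_half_le_norm_vec3 hc) (Real.exp_pos _).le
  have hhi : ‖Z x‖ ≤ √3 * Real.exp (x 2) := by
    rw [hnorm, mul_comm]
    refine mul_le_mul_of_nonneg_right (norm_vec3_le_sqrt_three (abs_h_le_one _) (abs_h_le_one _) ?_)
      (Real.exp_pos _).le
    rw [hc]
    linarith [abs_nonneg (h (x 0)), le_max_left |h (x 0)| |h (x 1)|]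
  refine ⟨⟨hlo, hhi⟩, fun ε hε hlog => ?_⟩
  have hexp : Real.exp (x 2) ≤ ε := (Real.le_log_iff_exp_le hε).1 hlog
  have hsqrt : √3 < 2 := by rw [Real.sqrt_lt' two_pos]; norm_num
  calc ‖Z x‖ ≤ √3 * Real.exp (x 2) := hhi
    _ ≤ √3 * ε := by gcongr
    _ < 2 * ε := by gcongr
end

section
/- The range of Z is exactly ℝ³ \ {0}: Z(x) ≠ 0 for every x ∈ ℝ³, and every y ∈ ℝ³ with y ≠ 0 equals Z(x) for some x ∈ ℝ³. -/
/-! With `N y = max |y₀| |y₁| + |y₂|`, the map factors as `Z x = exp x₂ • P (x₀, x₁)`, where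
`P (u, v) = (h u, h v, ε u ε v (1 - max |h u| |h v|))` lies on the surface `N = 1` because
`|h| ≤ 1`. So `Z` never vanishes, and since every `y ≠ 0` is `N y • (y / N y)`, surjectivity
reduces to `P` hitting the whole surface `N = 1`. On `[-1, 1]²` the point `P (a, b)` covers its
upper half `y₂ ≥ 0`; the reflection `u ↦ -u - 2` keeps `h` and flips `ε`, which gives the lower
half. -/

open Real

lemma vec3_apply_self (y : EuclideanSpace ℝ (Fin 3)) : vec3 (y 0) (y 1) (y 2) = y := by
  ext i; fin_cases i <;> rfl

lemma smul_vec3 (r a b c : ℝ) : r • vec3 a b c = vec3 (r * a) (r * b) (r * c) := by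
  ext i; fin_cases i <;> rfl

lemma vec3_eq_zero_iff {a b c : ℝ} : vec3 a b c = 0 ↔ a = 0 ∧ b = 0 ∧ c = 0 := by
  rw [← vec3_apply_self 0]
  refine ⟨fun hv => ⟨congrArg (· 0) hv, congrArg (· 1) hv, congrArg (· 2) hv⟩, ?_⟩
  rintro ⟨rfl, rfl, rfl⟩
  rfl

lemma h_of_mem_Icc {a : ℝ} (ha : a ∈ Set.Icc (-1) 1) : h a = a := by
  obtain ⟨ha₁, ha₂⟩ := ha
  unfold h
  rw [Int.fract_eq_self.mpr ⟨by linarith, by linarith⟩, abs_of_nonpos (by linarith)]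
  ring

lemma h_neg_sub_two {a : ℝ} (ha : a ∈ Set.Ioo (-1) 1) : h (-a - 2) = a := by
  obtain ⟨ha₁, ha₂⟩ := ha
  have hfract : Int.fract ((-a - 2 + 1) / 4) = (3 - a) / 4 :=
    Int.fract_eq_iff.mpr ⟨by linarith, by linarith, -1, by push_cast; ring⟩
  unfold h
  rw [hfract, abs_of_nonneg (by linarith)]
  ring

lemma eps_ne_zero (t : ℝ) : eps t ≠ 0 := zpow_ne_zero _ (by norm_num)

lemma eps_of_mem_Ico {a : ℝ} (ha : a ∈ Set.Ico (-1) 1) : eps a = 1 := by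
  obtain ⟨ha₁, ha₂⟩ := ha
  have hfloor : ⌊(a + 1) / 2⌋ = 0 :=
    Int.floor_eq_iff.mpr ⟨by push_cast; linarith, by push_cast; linarith⟩
  rw [eps, hfloor, zpow_zero]

lemma eps_neg_sub_two {a : ℝ} (ha : a ∈ Set.Ioo (-1) 1) : eps (-a - 2) = -1 := by
  obtain ⟨ha₁, ha₂⟩ := ha
  have hfloor : ⌊(-a - 2 + 1) / 2⌋ = -1 :=
    Int.floor_eq_iff.mpr ⟨by push_cast; linarith, by push_cast; linarith⟩
  rw [eps, hfloor, zpow_neg_one, inv_neg, inv_one]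

lemma Z_vec3 (u v t : ℝ) :
    Z (vec3 u v t) = exp t • vec3 (h u) (h v) (eps u * eps v * (1 - max |h u| |h v|)) :=
  rfl

lemma Z_ne_zero (x : EuclideanSpace ℝ (Fin 3)) : Z x ≠ 0 := by
  intro hx
  rw [Z, smul_eq_zero, vec3_eq_zero_iff] at hx
  rcases hx with hexp | ⟨h₀, h₁, h₂⟩
  · exact exp_ne_zero _ hexp
  · rw [h₀, h₁, abs_zero, max_self, sub_zero, mul_one] at h₂
    exact mul_ne_zero (eps_ne_zero _) (eps_ne_zero _) h₂

lemma exists_eq_vec3_of_max_abs_add_abs_eq_one {a b c : ℝ} (habc : max |a| |b| + |c| = 1) :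
    ∃ u v, vec3 (h u) (h v) (eps u * eps v * (1 - max |h u| |h v|)) = vec3 a b c := by
  have hc₁ : 1 - max |a| |b| = |c| := by linarith
  rcases eq_or_ne c 0 with rfl | hc₀
  · have hmax : max |a| |b| ≤ 1 := by rw [abs_zero] at hc₁; linarith
    have ha : a ∈ Set.Icc (-1) 1 := abs_le.mp ((le_max_left _ _).trans hmax)
    have hb : b ∈ Set.Icc (-1) 1 := abs_le.mp ((le_max_right _ _).trans hmax)
    exact ⟨a, b, by rw [h_of_mem_Icc ha, h_of_mem_Icc hb, hc₁, abs_zero, mul_zero]⟩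
  have hmax : max |a| |b| < 1 := by linarith [abs_pos.mpr hc₀]
  have ha : a ∈ Set.Ioo (-1) 1 := abs_lt.mp ((le_max_left _ _).trans_lt hmax)
  have hb : b ∈ Set.Ioo (-1) 1 := abs_lt.mp ((le_max_right _ _).trans_lt hmax)
  have hhb : h b = b := h_of_mem_Icc (Set.Ioo_subset_Icc_self hb)
  have heps : eps b = 1 := eps_of_mem_Ico (Set.Ioo_subset_Ico_self hb)
  rcases hc₀.lt_or_gt with hc | hc
  · refine ⟨-a - 2, b, ?_⟩
    rw [h_neg_sub_two ha, eps_neg_sub_two ha, hhb, heps, hc₁, abs_of_neg hc]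
    congr 1; ring
  · refine ⟨a, b, ?_⟩
    rw [h_of_mem_Icc (Set.Ioo_subset_Icc_self ha), eps_of_mem_Ico (Set.Ioo_subset_Ico_self ha),
      hhb, heps, hc₁, abs_of_pos hc]
    congr 1; ring

lemma max_abs_add_abs_pos {y : EuclideanSpace ℝ (Fin 3)} (hy : y ≠ 0) :
    0 < max |y 0| |y 1| + |y 2| := by
  by_contra! hle
  have h₀ : y 0 = 0 := abs_nonpos_iff.mp (by linarith [le_max_left |y 0| |y 1|, abs_nonneg (y 2)])
  have h₁ : y 1 = 0 := abs_nonpos_iff.mp (by linarith [le_max_right |y 0| |y 1|, abs_nonneg (y 2)])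
  have h₂ : y 2 = 0 := abs_nonpos_iff.mp (by linarith [abs_nonneg (y 0), le_max_left |y 0| |y 1|])
  exact hy (by rw [← vec3_apply_self y, vec3_eq_zero_iff]; exact ⟨h₀, h₁, h₂⟩)

lemma max_abs_div_add_abs_div_self {a b c : ℝ} (hr : 0 < max |a| |b| + |c|) :
    max |a / (max |a| |b| + |c|)| |b / (max |a| |b| + |c|)| + |c / (max |a| |b| + |c|)| = 1 := by
  rw [abs_div, abs_div, abs_div, abs_of_pos hr, max_div_div_right hr.le, ← add_div, div_self hr.ne']

lemma exists_Z_eq {y : EuclideanSpace ℝ (Fin 3)} (hy : y ≠ 0) : ∃ x, Z x = y := by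
  set r := max |y 0| |y 1| + |y 2|
  have hr : 0 < r := max_abs_add_abs_pos hy
  obtain ⟨u, v, huv⟩ := exists_eq_vec3_of_max_abs_add_abs_eq_one (max_abs_div_add_abs_div_self hr)
  refine ⟨vec3 u v (log r), ?_⟩
  rw [Z_vec3, huv, exp_log hr, smul_vec3, mul_div_cancel₀ _ hr.ne', mul_div_cancel₀ _ hr.ne',
    mul_div_cancel₀ _ hr.ne', vec3_apply_self]

/-- The range of Z is exactly ℝ³ \ {0}: Z omits 0 and attains every other value. -/
theorem zorich_range :
    (∀ x : EuclideanSpace ℝ (Fin 3), Z x ≠ 0) ∧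
      ∀ y : EuclideanSpace ℝ (Fin 3), y ≠ 0 → ∃ x, Z x = y :=
  ⟨Z_ne_zero, fun _ => exists_Z_eq⟩
end

section
/- The restriction of Z to the closed beam [-1,1] × [-1,1] × ℝ is injective. -/
/-!
On the beam `h` is the identity, and `ε(x₁)ε(x₂) = 1` except where `|x₁| = 1` or `|x₂| = 1`, where
the factor `1 - max |x₁| |x₂|` vanishes anyway; so there `Z x = e^{x₃} (x₁, x₂, 1 - max |x₁| |x₂|)`.
The scale `e^{x₃}` is read off this point as its third coordinate plus the larger of the absolute
values of the first two, and then `x₁, x₂` follow by dividing.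
-/

open Set

noncomputable def zorichBeam (x : EuclideanSpace ℝ (Fin 3)) : EuclideanSpace ℝ (Fin 3) :=
  Real.exp (x 2) • vec3 (x 0) (x 1) (1 - max |x 0| |x 1|)

lemma h_eq_self {t : ℝ} (ht : t ∈ Icc (-1 : ℝ) 1) : h t = t := by
  have hfract : Int.fract ((t + 1) / 4) = (t + 1) / 4 :=
    Int.fract_eq_self.2 ⟨by linarith [ht.1], by linarith [ht.2]⟩
  rw [h, hfract, show 4 * ((t + 1) / 4) - 2 = t - 1 by ring, abs_of_nonpos (by linarith [ht.2])]
  ring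

lemma eps_eq_one {t : ℝ} (ht : t ∈ Ico (-1 : ℝ) 1) : eps t = 1 := by
  have hfloor : ⌊(t + 1) / 2⌋ = 0 :=
    Int.floor_eq_zero_iff.2 ⟨by linarith [ht.1], by linarith [ht.2]⟩
  rw [eps, hfloor, zpow_zero]

lemma eps_mul_eps_mul_one_sub_max_abs {a b : ℝ} (ha : a ∈ Icc (-1 : ℝ) 1)
    (hb : b ∈ Icc (-1 : ℝ) 1) :
    eps a * eps b * (1 - max |a| |b|) = 1 - max |a| |b| := by
  have hmax : max |a| |b| ≤ 1 := max_le (abs_le.2 ha) (abs_le.2 hb)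
  rcases ha.2.eq_or_lt with rfl | ha₁
  · rw [abs_one] at hmax ⊢; rw [le_antisymm hmax (le_max_left _ _)]; ring
  rcases hb.2.eq_or_lt with rfl | hb₁
  · rw [abs_one] at hmax ⊢; rw [le_antisymm hmax (le_max_right _ _)]; ring
  rw [eps_eq_one ⟨ha.1, ha₁⟩, eps_eq_one ⟨hb.1, hb₁⟩, one_mul, one_mul]

lemma Z_eqOn_zorichBeam :
    EqOn Z zorichBeam {x : EuclideanSpace ℝ (Fin 3) | x 0 ∈ Icc (-1 : ℝ) 1 ∧ x 1 ∈ Icc (-1 : ℝ) 1} :=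
  fun _ ⟨hx₀, hx₁⟩ => by
    rw [Z, zorichBeam, h_eq_self hx₀, h_eq_self hx₁, eps_mul_eps_mul_one_sub_max_abs hx₀ hx₁]

lemma mul_one_sub_max_abs_add_max_abs_mul {r : ℝ} (hr : 0 ≤ r) (a b : ℝ) :
    r * (1 - max |a| |b|) + max |r * a| |r * b| = r := by
  rw [abs_mul, abs_mul, abs_of_nonneg hr, ← mul_max_of_nonneg _ _ hr]
  ring

lemma zorichBeam_injective : Function.Injective zorichBeam := by
  intro x y hxy
  have coord (i : Fin 3) := congrArg (· i) hxy
  simp only [zorichBeam, vec3, PiLp.smul_apply, smul_eq_mul] at coord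
  have e₀ : Real.exp (x 2) * x 0 = Real.exp (y 2) * y 0 := by simpa using coord 0
  have e₁ : Real.exp (x 2) * x 1 = Real.exp (y 2) * y 1 := by simpa using coord 1
  have e₂ : Real.exp (x 2) * (1 - max |x 0| |x 1|) = Real.exp (y 2) * (1 - max |y 0| |y 1|) := by
    simpa using coord 2
  have hscale : Real.exp (x 2) = Real.exp (y 2) := by
    rw [← mul_one_sub_max_abs_add_max_abs_mul (Real.exp_pos (x 2)).le (x 0) (x 1), e₀, e₁, e₂,
      mul_one_sub_max_abs_add_max_abs_mul (Real.exp_pos (y 2)).le]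
  rw [hscale] at e₀ e₁
  have h₀ : x 0 = y 0 := mul_left_cancel₀ (Real.exp_pos _).ne' e₀
  have h₁ : x 1 = y 1 := mul_left_cancel₀ (Real.exp_pos _).ne' e₁
  have h₂ : x 2 = y 2 := Real.exp_injective hscale
  ext i
  fin_cases i <;> assumption

/-- Z is injective on the closed beam [-1,1] × [-1,1] × ℝ. -/
theorem zorich_injOn_beam :
    Set.InjOn Z {x : EuclideanSpace ℝ (Fin 3) |
      x 0 ∈ Set.Icc (-1 : ℝ) 1 ∧ x 1 ∈ Set.Icc (-1 : ℝ) 1} :=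
  zorichBeam_injective.injOn.congr Z_eqOn_zorichBeam.symm
end

section
/- Oscillating orbits on the invariant ray (Lemma 5.3): let 0 < λ < 1 and let L' ∈ ℝ satisfy L' > 1 and L' ≥ log(1/λ). Suppose f : ℝ³ → ℝ³ satisfies f(t·(1,1,0)) = (1/(2λ·e^{|t|}·t))·(1,1,0) for every real t with |t| > L', and f(t·(1,1,0)) = (1/(2λt))·(1,1,0) for every real t with 0 < |t| < 1. Then for every real t with |t| > L' or 0 < |t| < 1/(2L'), the orbit of x = t·(1,1,0) under f neither stays bounded nor tends to infinity: there exist strictly increasing sequences (n_k) and (m_k) of natural numbers such that f^{n_k}(x) → 0 and ‖f^{m_k}(x)‖ → ∞ as k → ∞. -/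
/-!
On the ray `ℝ v` the map is, for large `|u|`, `u ↦ 1 / (2λ e^{|u|} u)`, which lands in the
region `|·| < 1` where the map is `s ↦ 1 / (2λ s)`; hence `f ∘ f` acts on large `u` as
`u ↦ e^{|u|} u`, which at least doubles `|u|`. So the even iterates of a large starting
point escape to infinity while the odd ones, of size about `1 / (2λ e^{|u|} |u|)`, tend to `0`.
A small starting point is sent to a large one in one step.
-/

open Filter Topology

def OrbitOscillates {X : Type*} [NormedAddCommGroup X] (f : X → X) (x : X) : Prop :=
  ∃ n m : ℕ → ℕ, StrictMono n ∧ StrictMono m ∧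
    Tendsto (fun k => f^[n k] x) atTop (𝓝 0) ∧
    Tendsto (fun k => ‖f^[m k] x‖) atTop atTop

theorem OrbitOscillates.of_apply {X : Type*} [NormedAddCommGroup X] {f : X → X} {x : X}
    (h : OrbitOscillates f (f x)) : OrbitOscillates f x := by
  obtain ⟨n, m, hn, hm, hzero, hinf⟩ := h
  refine ⟨(· + 1) ∘ n, (· + 1) ∘ m, (strictMono_id.add_const 1).comp hn,
    (strictMono_id.add_const 1).comp hm, ?_, ?_⟩
  · simpa only [Function.comp_apply, Function.iterate_succ_apply] using hzero
  · simpa only [Function.comp_apply, Function.iterate_succ_apply] using hinf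

/-- The action of `f ∘ f` on large points of the ray. -/
noncomputable def expScale (u : ℝ) : ℝ := Real.exp |u| * u

theorem abs_expScale (u : ℝ) : |expScale u| = Real.exp |u| * |u| := by
  rw [expScale, abs_mul, Real.abs_exp]

theorem abs_le_abs_expScale (u : ℝ) : |u| ≤ |expScale u| := by
  rw [abs_expScale]
  exact le_mul_of_one_le_left (abs_nonneg u) (Real.one_le_exp (abs_nonneg u))

theorem two_mul_abs_le_abs_expScale {u : ℝ} (hu : 1 ≤ |u|) : 2 * |u| ≤ |expScale u| := by
  rw [abs_expScale]
  nlinarith [Real.add_one_le_exp |u|]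

theorem two_pow_mul_le_abs_iterate_expScale {t : ℝ} (ht : 1 ≤ |t|) (k : ℕ) :
    2 ^ k * |t| ≤ |expScale^[k] t| := by
  induction k with
  | zero => simp
  | succ k ih =>
    have hk : 1 ≤ |expScale^[k] t| :=
      le_trans (one_le_mul_of_one_le_of_one_le (one_le_pow₀ one_le_two) ht) ih
    calc 2 ^ (k + 1) * |t| = 2 * (2 ^ k * |t|) := by ring
      _ ≤ 2 * |expScale^[k] t| := by linarith
      _ ≤ |expScale^[k + 1] t| := by
        rw [Function.iterate_succ_apply']
        exact two_mul_abs_le_abs_expScale hk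

theorem tendsto_abs_iterate_expScale {t : ℝ} (ht : 1 ≤ |t|) :
    Tendsto (fun k => |expScale^[k] t|) atTop atTop :=
  tendsto_atTop_mono (two_pow_mul_le_abs_iterate_expScale ht)
    ((tendsto_pow_atTop_atTop_of_one_lt one_lt_two).atTop_mul_const (by linarith))

/-- `f` acts on the ray `ℝ v` like the map `f_λ = M ∘ λF` of the paper does on `ℝ (1,1,0)`. -/
structure RayAction {E : Type*} [NormedAddCommGroup E] [NormedSpace ℝ E]
    (lam L' : ℝ) (f : E → E) (v : E) : Prop where
  lam_pos : 0 < lam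
  lam_lt_one : lam < 1
  one_lt : 1 < L'
  log_inv_le : Real.log (1 / lam) ≤ L'
  apply_of_lt_abs : ∀ t : ℝ, L' < |t| →
    f (t • v) = (1 / (2 * lam * Real.exp |t| * t)) • v
  apply_of_abs_lt_one : ∀ t : ℝ, 0 < |t| → |t| < 1 →
    f (t • v) = (1 / (2 * lam * t)) • v

namespace RayAction

variable {E : Type*} [NormedAddCommGroup E] [NormedSpace ℝ E] {lam L' : ℝ} {f : E → E} {v : E}

theorem one_le_lam_mul_exp (h : RayAction lam L' f v) {s : ℝ} (hs : L' ≤ s) :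
    1 ≤ lam * Real.exp s :=
  calc 1 = lam * Real.exp (Real.log (1 / lam)) := by
        rw [Real.exp_log (by simpa using h.lam_pos)]; field_simp [h.lam_pos.ne']
    _ ≤ lam * Real.exp s := by gcongr; exacts [h.lam_pos.le, h.log_inv_le.trans hs]

theorem abs_coeff_le (h : RayAction lam L' f v) {u : ℝ} (hu : L' < |u|) :
    |1 / (2 * lam * Real.exp |u| * u)| ≤ (2 * |u|)⁻¹ := by
  have hu0 : 0 < |u| := by linarith [h.one_lt]
  have hle := h.one_le_lam_mul_exp hu.le
  rw [abs_div, abs_one, abs_mul, abs_of_pos (by positivity [h.lam_pos]), one_div]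
  gcongr
  nlinarith

theorem apply_apply_of_lt_abs (h : RayAction lam L' f v) {u : ℝ} (hu : L' < |u|) :
    f (f (u • v)) = expScale u • v := by
  have hu0 : u ≠ 0 := abs_pos.mp (by linarith [h.one_lt])
  have hc := h.abs_coeff_le hu
  have hc0 : 0 < |1 / (2 * lam * Real.exp |u| * u)| := by
    simpa [hu0, h.lam_pos.ne'] using Real.exp_pos |u|
  have hc1 : |1 / (2 * lam * Real.exp |u| * u)| < 1 :=
    hc.trans_lt (inv_lt_one_of_one_lt₀ (by linarith [h.one_lt]))
  rw [h.apply_of_lt_abs u hu, h.apply_of_abs_lt_one _ hc0 hc1, expScale]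
  field_simp [h.lam_pos.ne']

theorem iterate_two_mul_of_lt_abs (h : RayAction lam L' f v) (k : ℕ) :
    ∀ {t : ℝ}, L' < |t| → f^[2 * k] (t • v) = (expScale^[k] t) • v := by
  induction k with
  | zero => simp
  | succ k ih =>
    intro t ht
    rw [show 2 * (k + 1) = 2 * k + 1 + 1 by ring, Function.iterate_succ_apply,
      Function.iterate_succ_apply, h.apply_apply_of_lt_abs ht,
      ih (ht.trans_le (abs_le_abs_expScale t)), Function.iterate_succ_apply]

theorem norm_apply_le (h : RayAction lam L' f v) {u : ℝ} (hu : L' < |u|) :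
    ‖f (u • v)‖ ≤ (2 * |u|)⁻¹ * ‖v‖ := by
  rw [h.apply_of_lt_abs u hu, norm_smul, Real.norm_eq_abs]
  exact mul_le_mul_of_nonneg_right (h.abs_coeff_le hu) (norm_nonneg v)

theorem orbitOscillates_of_lt_abs (h : RayAction lam L' f v) (hv : v ≠ 0) {t : ℝ}
    (ht : L' < |t|) : OrbitOscillates f (t • v) := by
  have hu := tendsto_abs_iterate_expScale (t := t) (by linarith [h.one_lt])
  have hbig : ∀ k, L' < |expScale^[k] t| := fun k =>
    ht.trans_le (le_trans (le_mul_of_one_le_left (abs_nonneg t) (one_le_pow₀ one_le_two))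
      (two_pow_mul_le_abs_iterate_expScale (by linarith [h.one_lt]) k))
  refine ⟨fun k => 2 * k + 1, fun k => 2 * k, fun a b hab => by dsimp only; omega,
    fun a b hab => by dsimp only; omega, ?_, ?_⟩
  · rw [tendsto_zero_iff_norm_tendsto_zero]
    refine squeeze_zero (g := fun k => (2 * |expScale^[k] t|)⁻¹ * ‖v‖)
      (fun k => norm_nonneg _) (fun k => ?_)
      (by simpa using ((hu.const_mul_atTop two_pos).inv_tendsto_atTop).mul_const ‖v‖)
    rw [Function.iterate_succ_apply', h.iterate_two_mul_of_lt_abs k ht]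
    exact h.norm_apply_le (hbig k)
  · simp only [h.iterate_two_mul_of_lt_abs _ ht, norm_smul, Real.norm_eq_abs]
    exact hu.atTop_mul_const (norm_pos_iff.mpr hv)

theorem lt_abs_apply_coeff (h : RayAction lam L' f v) {t : ℝ} (ht0 : 0 < |t|)
    (ht : |t| < 1 / (2 * L')) : L' < |1 / (2 * lam * t)| := by
  have hL' := h.one_lt
  have hlam := h.lam_pos
  rw [abs_div, abs_one, abs_mul, abs_of_pos (by positivity : (0 : ℝ) < 2 * lam),
    lt_div_iff₀ (by positivity)]
  rw [lt_div_iff₀ (by positivity)] at ht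
  nlinarith [h.lam_lt_one]

theorem orbitOscillates (h : RayAction lam L' f v) (hv : v ≠ 0) {t : ℝ}
    (ht : L' < |t| ∨ (0 < |t| ∧ |t| < 1 / (2 * L'))) : OrbitOscillates f (t • v) := by
  rcases ht with ht | ⟨ht0, ht⟩
  · exact h.orbitOscillates_of_lt_abs hv ht
  · have ht1 : |t| < 1 := ht.trans (by rw [div_lt_one] <;> linarith [h.one_lt])
    refine OrbitOscillates.of_apply ?_
    rw [h.apply_of_abs_lt_one t ht0 ht1]
    exact h.orbitOscillates_of_lt_abs hv (h.lt_abs_apply_coeff ht0 ht)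

end RayAction

theorem vec3_one_one_zero_ne_zero : vec3 1 1 0 ≠ 0 := fun h => by
  simpa [vec3] using congrArg (fun w : EuclideanSpace ℝ (Fin 3) => w 0) h

/-- Oscillating orbits on the invariant ray: if f acts on {t(1,1,0)} like
    M ∘ λF, then for |t| > L' or 0 < |t| < 1/(2L') the orbit of t(1,1,0) has a
    subsequence tending to 0 and a subsequence tending to infinity, so it
    neither stays bounded nor tends to infinity. -/
theorem oscillating_orbits (lam L' : ℝ) (hlam0 : 0 < lam) (hlam1 : lam < 1)
    (hL'1 : 1 < L') (hL'log : Real.log (1 / lam) ≤ L')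
    (f : EuclideanSpace ℝ (Fin 3) → EuclideanSpace ℝ (Fin 3))
    (hbig : ∀ t : ℝ, L' < |t| →
      f (t • vec3 1 1 0) = (1 / (2 * lam * Real.exp |t| * t)) • vec3 1 1 0)
    (hsmall : ∀ t : ℝ, 0 < |t| → |t| < 1 →
      f (t • vec3 1 1 0) = (1 / (2 * lam * t)) • vec3 1 1 0) :
    ∀ t : ℝ, (L' < |t| ∨ (0 < |t| ∧ |t| < 1 / (2 * L'))) →
      ∃ n m : ℕ → ℕ, StrictMono n ∧ StrictMono m ∧
        Filter.Tendsto (fun k => f^[n k] (t • vec3 1 1 0)) Filter.atTop (nhds 0) ∧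
        Filter.Tendsto (fun k => ‖f^[m k] (t • vec3 1 1 0)‖) Filter.atTop Filter.atTop :=
  fun _ ht => RayAction.orbitOscillates ⟨hlam0, hlam1, hL'1, hL'log, hbig, hsmall⟩
    vec3_one_one_zero_ne_zero ht
end
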